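/- For every x ∈ ℝ³ and every direction v ∈ ℝ³, (DG(x)[v])·G(x)⁻¹ − G(x)⁻¹·(DG(x)[v]) = −(2i/(ℓ² + r²))·((x×v)·τ), where x×v is the cross product in ℝ³. -/

import Mathlib

open Matrix Complex

noncomputable section

attribute [local instance] Matrix.normedAddCommGroup Matrix.normedSpace

/-- The Pauli matrices τ₁, τ₂, τ₃. -/
def pauli : Fin 3 → Matrix (Fin 2) (Fin 2) ℂ :=
  ![!![0, 1; 1, 0], !![0, -I; I, 0], !![1, 0; 0, -1]]

/-- The Pauli vector x·τ = x₁τ₁ + x₂τ₂ + x₃τ₃ for x ∈ ℝ³. -/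
def pauliVec (x : EuclideanSpace ℝ (Fin 3)) : Matrix (Fin 2) (Fin 2) ℂ :=
  (x 0 : ℂ) • pauli 0 + (x 1 : ℂ) • pauli 1 + (x 2 : ℂ) • pauli 2

/-- G(x) = (ℓ·I + i x·τ)/√(ℓ² + r²), the inverse gnomonic projection. -/
def Gmap (ℓ : ℝ) (x : EuclideanSpace ℝ (Fin 3)) : Matrix (Fin 2) (Fin 2) ℂ :=
  (((Real.sqrt (ℓ ^ 2 + ‖x‖ ^ 2))⁻¹ : ℝ) : ℂ) •
    ((ℓ : ℂ) • (1 : Matrix (Fin 2) (Fin 2) ℂ) + I • pauliVec x)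

/-- H(x) = ((ℓ² − r²)·I + 2iℓ x·τ)/(ℓ² + r²), the inverse stereographic projection. -/
def Hmap (ℓ : ℝ) (x : EuclideanSpace ℝ (Fin 3)) : Matrix (Fin 2) (Fin 2) ℂ :=
  ((((ℓ ^ 2 + ‖x‖ ^ 2))⁻¹ : ℝ) : ℂ) •
    (((ℓ ^ 2 - ‖x‖ ^ 2 : ℝ) : ℂ) • (1 : Matrix (Fin 2) (Fin 2) ℂ)
      + ((2 * ℓ : ℝ) : ℂ) • I • pauliVec x)

/-- The Pauli vector (x×v)·τ of the cross product x×v in ℝ³. -/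
def crossPauliVec (x v : EuclideanSpace ℝ (Fin 3)) : Matrix (Fin 2) (Fin 2) ℂ :=
  ((x 1 * v 2 - x 2 * v 1 : ℝ) : ℂ) • pauli 0 +
    ((x 2 * v 0 - x 0 * v 2 : ℝ) : ℂ) • pauli 1 +
      ((x 0 * v 1 - x 1 * v 0 : ℝ) : ℂ) • pauli 2

/-!
Write `ρ = √(ℓ² + r²)` and `U = ℓ + i x·τ`, so that `G = ρ⁻¹ U`. Since `(x·τ)² = r²`, the matrix
`Ū = ℓ − i x·τ` satisfies `U Ū = ρ²`, hence `G⁻¹ = ρ⁻¹ Ū`. The derivative is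
`DG(x)[v] = ρ⁻¹ i v·τ + (Dρ⁻¹(x)[v]) U`, and its second term commutes with `Ū` because both lie
in the commutative algebra spanned by `1` and `x·τ`. What remains is
`ρ⁻² [i v·τ, −i x·τ] = −ρ⁻² [x·τ, v·τ]`, and the Pauli relations give `[a·τ, b·τ] = 2i (a×b)·τ`.
-/

section Algebra

variable {A : Type*} [Ring A] [Algebra ℂ A]

theorem add_I_smul_mul_sub_I_smul (ℓ : ℂ) (P : A) :
    (ℓ • 1 + I • P) * (ℓ • 1 - I • P) = ℓ ^ 2 • 1 + P * P := by
  simp only [add_mul, mul_sub, smul_mul_assoc, mul_smul_comm, one_mul, mul_one]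
  match_scalars <;> grind [I_sq]

theorem lie_smul_add_smul_sub_I_smul (a b ℓ : ℂ) (P Q : A) :
    ⁅a • (I • Q) + b • (ℓ • 1 + I • P), a • (ℓ • 1 - I • P)⁆ = -(a ^ 2 • ⁅P, Q⁆) := by
  simp only [Ring.lie_def, mul_add, add_mul, sub_mul, mul_sub, smul_mul_assoc, mul_smul_comm,
    one_mul, mul_one]
  match_scalars <;> grind [I_sq]

end Algebra

theorem pauliVec_mul_self (x : EuclideanSpace ℝ (Fin 3)) :
    pauliVec x * pauliVec x = ((‖x‖ ^ 2 : ℝ) : ℂ) • 1 := by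
  rw [EuclideanSpace.norm_sq_eq]
  ext i j
  fin_cases i <;> fin_cases j <;>
    simp [pauliVec, pauli, Matrix.mul_apply, Fin.sum_univ_succ] <;> ring_nf <;> simp [I_sq]

theorem lie_pauliVec (a b : EuclideanSpace ℝ (Fin 3)) :
    ⁅pauliVec a, pauliVec b⁆ = (2 * I) • crossPauliVec a b := by
  rw [Ring.lie_def]
  ext i j
  fin_cases i <;> fin_cases j <;>
    simp [pauliVec, crossPauliVec, pauli] <;> ring_nf <;> simp [I_sq] <;> ring

def pauliVecCLM : EuclideanSpace ℝ (Fin 3) →L[ℝ] Matrix (Fin 2) (Fin 2) ℂ :=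
  (EuclideanSpace.proj 0).smulRight (pauli 0) + (EuclideanSpace.proj 1).smulRight (pauli 1) +
    (EuclideanSpace.proj 2).smulRight (pauli 2)

@[simp]
theorem pauliVecCLM_apply (x : EuclideanSpace ℝ (Fin 3)) : pauliVecCLM x = pauliVec x := by
  simp [pauliVecCLM, pauliVec]

theorem Gmap_inv {ℓ : ℝ} {x : EuclideanSpace ℝ (Fin 3)} (hx : ℓ ^ 2 + ‖x‖ ^ 2 ≠ 0) :
    (Gmap ℓ x)⁻¹ =
      (((√(ℓ ^ 2 + ‖x‖ ^ 2))⁻¹ : ℝ) : ℂ) • ((ℓ : ℂ) • 1 - I • pauliVec x) := by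
  refine Matrix.inv_eq_right_inv ?_
  have hρ : ((√(ℓ ^ 2 + ‖x‖ ^ 2))⁻¹) ^ 2 * (ℓ ^ 2 + ‖x‖ ^ 2) = 1 := by
    rw [inv_pow, Real.sq_sqrt (by positivity), inv_mul_cancel₀ hx]
  rw [Gmap, smul_mul_smul_comm, add_I_smul_mul_sub_I_smul, pauliVec_mul_self, ← add_smul,
    smul_smul, ← sq]
  norm_cast
  rw [hρ, one_smul]

theorem differentiableAt_inv_sqrt_sq_add_norm_sq {E : Type*} [NormedAddCommGroup E]
    [InnerProductSpace ℝ E] {ℓ : ℝ} {x : E} (hx : ℓ ^ 2 + ‖x‖ ^ 2 ≠ 0) :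
    DifferentiableAt ℝ (fun y : E => (√(ℓ ^ 2 + ‖y‖ ^ 2))⁻¹) x :=
  ((differentiableAt_id.norm_sq ℝ).const_add _ |>.sqrt hx).inv
    (Real.sqrt_ne_zero'.2 (by positivity))

theorem fderiv_Gmap_apply {ℓ : ℝ} {x : EuclideanSpace ℝ (Fin 3)} (hx : ℓ ^ 2 + ‖x‖ ^ 2 ≠ 0)
    (v : EuclideanSpace ℝ (Fin 3)) :
    fderiv ℝ (Gmap ℓ) x v =
      (((√(ℓ ^ 2 + ‖x‖ ^ 2))⁻¹ : ℝ) : ℂ) • (I • pauliVec v) +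
        ((fderiv ℝ (fun y : EuclideanSpace ℝ (Fin 3) => (√(ℓ ^ 2 + ‖y‖ ^ 2))⁻¹) x v : ℝ) : ℂ) •
          ((ℓ : ℂ) • 1 + I • pauliVec x) := by
  have hU :=
    (I • pauliVecCLM).hasFDerivAt.const_add ((ℓ : ℂ) • (1 : Matrix (Fin 2) (Fin 2) ℂ)) (x := x)
  simp only [_root_.smul_apply, pauliVecCLM_apply] at hU
  have hG : HasFDerivAt (Gmap ℓ) _ x :=
    (differentiableAt_inv_sqrt_sq_add_norm_sq hx).hasFDerivAt.smul hU
  rw [hG.fderiv]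
  rfl

/-- dG G⁻¹ − G⁻¹ dG = −(2i/(ℓ² + r²))·((x×v)·τ). -/
theorem dG_Ginv_sub_Ginv_dG (ℓ : ℝ) (hℓ : 0 < ℓ) (x v : EuclideanSpace ℝ (Fin 3)) :
    fderiv ℝ (Gmap ℓ) x v * (Gmap ℓ x)⁻¹ - (Gmap ℓ x)⁻¹ * fderiv ℝ (Gmap ℓ) x v =
      (-(2 * I) / ((ℓ ^ 2 + ‖x‖ ^ 2 : ℝ) : ℂ)) • crossPauliVec x v := by
  have hx : ℓ ^ 2 + ‖x‖ ^ 2 ≠ 0 := by positivity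
  have hρ : (((√(ℓ ^ 2 + ‖x‖ ^ 2))⁻¹ : ℝ) : ℂ) ^ 2 = ((ℓ ^ 2 + ‖x‖ ^ 2 : ℝ) : ℂ)⁻¹ := by
    norm_cast
    rw [inv_pow, Real.sq_sqrt (by positivity)]
  rw [← Ring.lie_def, fderiv_Gmap_apply hx, Gmap_inv hx, lie_smul_add_smul_sub_I_smul, hρ,
    lie_pauliVec, smul_smul, ← neg_smul]
  congr 1
  ring
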